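/- Let W_{N+1}(ε), …, W_1(ε) be the Kleinrock accumulating-priority expected waiting times defined by the downward recursion, and define the expected queue lengths Q_i(ε) = λ_i(ε) · W_i(ε). Then for every class i ∈ {1, …, N+1}, lim_{ε ↓ 0} Q_i(ε) / (Σ_{k=1}^{N+1} Q_k(ε)) = (λ_i/b_i) / (Σ_{k=1}^{N+1} λ_k/b_k). -/

import Mathlib

open Filter Topology Finset

/-!
Multiplied by `ε`, the recursion becomes one for the scaled waiting times `ε * W ε i`, whose
coefficients converge as `ε ↓ 0` and whose limiting denominators are positive. By downward
induction on the class, `ε * W ε i → c / b i` with `c = (∑ k, λ_k / b_k)⁻¹`: these values solve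
the limiting recursion, where the factor `1 - ε` becomes `1`. Hence the proportions
`λ_i W_i / ∑ λ_k W_k = λ_i (ε W_i) / ∑ λ_k (ε W_k)` tend to `c (λ_i / b_i) / (c ∑ λ_k / b_k)`.
-/

theorem Finset.sum_Iic_add_sum_Ioi {ι M : Type*} [Fintype ι] [LinearOrder ι]
    [LocallyFiniteOrderBot ι] [LocallyFiniteOrderTop ι] [AddCommMonoid M] (f : ι → M) (i : ι) :
    ∑ k ∈ Iic i, f k + ∑ k ∈ Ioi i, f k = ∑ k, f k := by
  rw [← filter_ge_eq_Iic, ← filter_lt_eq_Ioi]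
  simpa only [not_le] using sum_filter_add_sum_filter_not univ (· ≤ i) f

theorem tendsto_div_sum_of_tendsto_const_mul {α ι : Type*} [Fintype ι] {F : Filter α}
    {f : α → ι → ℝ} {g : ι → ℝ} {c : ℝ} (hc : c ≠ 0) (hg : ∑ k, g k ≠ 0)
    (hf : ∀ k, Tendsto (fun a => f a k) F (𝓝 (c * g k))) (i : ι) :
    Tendsto (fun a => f a i / ∑ k, f a k) F (𝓝 (g i / ∑ k, g k)) := by
  have h := (hf i).div (tendsto_finsetSum _ fun k _ => hf k)
    (by rw [← mul_sum]; exact mul_ne_zero hc hg)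
  rwa [← mul_sum, mul_div_mul_left _ _ hc] at h

section Kleinrock

variable {ι : Type*} [Fintype ι] [LinearOrder ι] [LocallyFiniteOrderBot ι]
  [LocallyFiniteOrderTop ι]

noncomputable def kleinrockDenom (l b : ι → ℝ) (i : ι) : ℝ :=
  1 - ∑ k ∈ Iic i, l k * (1 - b i / b k)

theorem kleinrockDenom_eq {l b : ι → ℝ} (hl : ∑ k, l k = 1) (hb : ∀ k, b k ≠ 0) (i : ι) :
    kleinrockDenom l b i = ∑ k ∈ Ioi i, l k + b i * ∑ k ∈ Iic i, l k / b k := by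
  have h : ∑ k ∈ Iic i, l k * (1 - b i / b k)
      = ∑ k ∈ Iic i, l k - b i * ∑ k ∈ Iic i, l k / b k := by
    rw [mul_sum, ← sum_sub_distrib]
    refine sum_congr rfl fun k _ => ?_
    field_simp [hb k]
  rw [kleinrockDenom, h, ← hl, ← sum_Iic_add_sum_Ioi l i]
  ring

theorem kleinrockDenom_pos {l b : ι → ℝ} (hl_pos : ∀ k, 0 < l k) (hl : ∑ k, l k = 1)
    (hb : ∀ k, 0 < b k) (i : ι) : 0 < kleinrockDenom l b i := by
  rw [kleinrockDenom_eq hl fun k => (hb k).ne']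
  have hIoi : 0 ≤ ∑ k ∈ Ioi i, l k := sum_nonneg fun k _ => (hl_pos k).le
  have hIic : 0 < ∑ k ∈ Iic i, l k / b k :=
    sum_pos (fun k _ => div_pos (hl_pos k) (hb k)) ⟨i, mem_Iic.2 le_rfl⟩
  nlinarith [hb i]

theorem kleinrock_limit_equation {l b : ι → ℝ} (hl : ∑ k, l k = 1) (hb : ∀ k, b k ≠ 0)
    {c : ℝ} (hc : c * ∑ k, l k / b k = 1) (i : ι) :
    1 - ∑ k ∈ Ioi i, l k * (1 - b k / b i) * (c / b k) = c / b i * kleinrockDenom l b i := by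
  have h : ∑ k ∈ Ioi i, l k * (1 - b k / b i) * (c / b k)
      = c * ∑ k ∈ Ioi i, l k / b k - c / b i * ∑ k ∈ Ioi i, l k := by
    rw [mul_sum, mul_sum, ← sum_sub_distrib]
    refine sum_congr rfl fun k _ => ?_
    field_simp [hb k, hb i]
  rw [kleinrockDenom_eq hl hb, h, ← hc, ← sum_Iic_add_sum_Ioi (fun k => l k / b k) i]
  field_simp [hb i]
  ring

theorem tendsto_of_kleinrock_recursion {α : Type*} {F : Filter α} {l : α → ι → ℝ}
    {lim b : ι → ℝ} (hl : ∀ k, Tendsto (fun a => l a k) F (𝓝 (lim k)))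
    (hlim_pos : ∀ k, 0 < lim k) (hlim : ∑ k, lim k = 1) (hb : ∀ k, 0 < b k)
    {δ : α → ℝ} (hδ : Tendsto δ F (𝓝 0)) {V : α → ι → ℝ}
    (hV : ∀ᶠ a in F, ∀ i, V a i =
      (1 - δ a - ∑ k ∈ Ioi i, l a k * (1 - b k / b i) * V a k) / kleinrockDenom (l a) b i)
    (i : ι) : Tendsto (fun a => V a i) F (𝓝 ((∑ k, lim k / b k)⁻¹ / b i)) := by
  set c := (∑ k, lim k / b k)⁻¹
  have hc : c * ∑ k, lim k / b k = 1 :=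
    inv_mul_cancel₀ (sum_pos (fun k _ => div_pos (hlim_pos k) (hb k)) ⟨i, mem_univ i⟩).ne'
  have hD := kleinrockDenom_pos hlim_pos hlim hb
  induction i using WellFoundedGT.induction with
  | _ i IH =>
    have hnum : Tendsto (fun a => 1 - δ a - ∑ k ∈ Ioi i, l a k * (1 - b k / b i) * V a k) F
        (𝓝 (1 - 0 - ∑ k ∈ Ioi i, lim k * (1 - b k / b i) * (c / b k))) :=
      (tendsto_const_nhds.sub hδ).sub <| tendsto_finsetSum _ fun k hk =>
        ((hl k).mul tendsto_const_nhds).mul (IH k (mem_Ioi.1 hk))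
    have hden : Tendsto (fun a => kleinrockDenom (l a) b i) F (𝓝 (kleinrockDenom lim b i)) :=
      tendsto_const_nhds.sub <| tendsto_finsetSum _ fun k _ =>
        (hl k).mul tendsto_const_nhds
    have h := hnum.div hden (hD i).ne'
    rw [sub_zero, kleinrock_limit_equation hlim (fun k => (hb k).ne') hc,
      mul_div_cancel_right₀ _ (hD i).ne'] at h
    exact h.congr' (hV.mono fun a ha => (ha i).symm)

end Kleinrock

theorem accumulating_priority_heavy_traffic_queue_proportion_general
    (N : ℕ) (b : Fin (N + 1) → ℝ)
    (hb_pos : ∀ i, 0 < b i)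
    (lam : ℝ → Fin (N + 1) → ℝ) (lamLim : Fin (N + 1) → ℝ)
    (hlamLim_pos : ∀ i, 0 < lamLim i)
    (hlamLim_sum : ∑ i, lamLim i = 1)
    (hlam_tendsto : ∀ i, Tendsto (fun ε => lam ε i) (𝓝[>] (0 : ℝ)) (𝓝 (lamLim i)))
    (W : ℝ → Fin (N + 1) → ℝ)
    (hW : ∀ ε ∈ Set.Ioo (0 : ℝ) 1, ∀ i,
      W ε i = (1 / ε - 1 - ∑ k ∈ Finset.Ioi i, lam ε k * (1 - b k / b i) * W ε k) /
        (1 - ∑ k ∈ Finset.Iic i, lam ε k * (1 - b i / b k))) :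
    ∀ i, Tendsto (fun ε => (lam ε i * W ε i) / ∑ k, lam ε k * W ε k) (𝓝[>] (0 : ℝ))
      (𝓝 ((lamLim i / b i) / ∑ k, lamLim k / b k)) := by
  have hS : 0 < ∑ k, lamLim k / b k :=
    sum_pos (fun k _ => div_pos (hlamLim_pos k) (hb_pos k)) univ_nonempty
  have hεW := tendsto_of_kleinrock_recursion hlam_tendsto hlamLim_pos hlamLim_sum hb_pos
    (tendsto_id.mono_left nhdsWithin_le_nhds) (V := fun ε k => ε * W ε k) <| by
    filter_upwards [Ioo_mem_nhdsGT zero_lt_one] with ε hε k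
    rw [hW ε hε k, ← mul_div_assoc, mul_sub, mul_sub, mul_one_div_cancel hε.1.ne', mul_one,
      mul_sum]
    simp only [mul_left_comm ε, kleinrockDenom, id]
  have hQ : ∀ k, Tendsto (fun ε => ε * (lam ε k * W ε k)) (𝓝[>] 0)
      (𝓝 ((∑ k, lamLim k / b k)⁻¹ * (lamLim k / b k))) := fun k => by
    rw [← mul_div_left_comm]
    simpa only [mul_left_comm] using (hlam_tendsto k).mul (hεW k)
  intro i
  refine (tendsto_div_sum_of_tendsto_const_mul (inv_ne_zero hS.ne') hS.ne' hQ i).congr' ?_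
  filter_upwards [self_mem_nhdsWithin] with ε (hε : 0 < ε)
  rw [← mul_sum, mul_div_mul_left _ _ hε.ne']

/-- **Heavy-traffic limit of the queue-length proportions in the Kleinrock
accumulating-priority queue.**  With `W ε` defined by the Kleinrock downward recursion and
`Q ε i = lam ε i * W ε i`, for every class `i`,
`Q ε i / (∑ k, Q ε k) → (lamLim i / b i) / (∑ k, lamLim k / b k)` as `ε ↓ 0`. -/
theorem accumulating_priority_heavy_traffic_queue_proportion
    (N : ℕ) (b : Fin (N + 1) → ℝ)
    (hb_pos : ∀ i, 0 < b i) (hb_anti : StrictAnti b)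
    (lam : ℝ → Fin (N + 1) → ℝ) (lamLim : Fin (N + 1) → ℝ)
    (hlam_pos : ∀ ε ∈ Set.Ioo (0 : ℝ) 1, ∀ i, 0 < lam ε i)
    (hlam_sum : ∀ ε ∈ Set.Ioo (0 : ℝ) 1, ∑ i, lam ε i = 1 - ε)
    (hlamLim_pos : ∀ i, 0 < lamLim i)
    (hlamLim_sum : ∑ i, lamLim i = 1)
    (hlam_tendsto : ∀ i, Tendsto (fun ε => lam ε i) (𝓝[>] (0 : ℝ)) (𝓝 (lamLim i)))
    (W : ℝ → Fin (N + 1) → ℝ)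
    (hW : ∀ ε ∈ Set.Ioo (0 : ℝ) 1, ∀ i,
      W ε i = (1 / ε - 1 - ∑ k ∈ Finset.Ioi i, lam ε k * (1 - b k / b i) * W ε k) /
        (1 - ∑ k ∈ Finset.Iic i, lam ε k * (1 - b i / b k))) :
    ∀ i, Tendsto (fun ε => (lam ε i * W ε i) / ∑ k, lam ε k * W ε k) (𝓝[>] (0 : ℝ))
      (𝓝 ((lamLim i / b i) / ∑ k, lamLim k / b k)) :=
  accumulating_priority_heavy_traffic_queue_proportion_general N b hb_pos lam lamLim hlamLim_pos
    hlamLim_sum hlam_tendsto W hW
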